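/- Let Σ = (x_0,…,x_n) be a permutation of [n]. The standard matching M_Σ is a well-defined near-perfect matching of the graph Γ_n, whose unique critical (unmatched) vertex is the ordered set partition ({x_0}|{x_1}|…|{x_n}) into singletons. -/

import Mathlib

open Finset

/-- union of a list of finsets -/
def lunion {α : Type*} [DecidableEq α] (L : List (Finset α)) : Finset α := L.foldr (· ∪ ·) ∅

/-- `IsOSP A L` : `L` is an ordered set partition of the finite set `A`. -/
def IsOSP {α : Type*} [DecidableEq α] (A : Finset α) (L : List (Finset α)) : Prop :=
  (∀ B ∈ L, B.Nonempty) ∧ L.Pairwise (fun B C => Disjoint B C) ∧ lunion L = A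

/-- `seenBlk L x` = `A_1 ∪ … ∪ A_{i(x)}`, the union of the blocks of `L` up to and
including the block containing `x`. -/
def seenBlk {α : Type*} [DecidableEq α] : List (Finset α) → α → Finset α
  | [], _ => ∅
  | A :: rest, x => if x ∈ A then A else A ∪ seenBlk rest x

/-- rank (1-based position in the increasing order) of `x` in the finset `S`. -/
def rankIn (S : Finset ℕ) (x : ℕ) : ℕ := (S.filter (fun y => y ≤ x)).card

/-- the set `F(σ)` of flippable colors, for an ordered set partition of `[n] = {0,…,n}` -/
def Fset (n : ℕ) (L : List (Finset ℕ)) : Finset ℕ :=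
  match L.getLast? with
  | some A => if A.card = 1 then Finset.range (n+1) \ A else Finset.range (n+1)
  | none => Finset.range (n+1)

/-- the flip `F(σ,x)` of an ordered set partition with respect to the color `x` -/
def flipOSP (x : ℕ) : List (Finset ℕ) → List (Finset ℕ)
  | [] => []
  | A :: rest =>
    if x ∈ A then
      if 2 ≤ A.card then {x} :: A.erase x :: rest
      else
        match rest with
        | [] => [A]
        | B :: rest' => insert x B :: rest'
    else A :: flipOSP x rest

def levelAux : List ℕ → List (Finset ℕ) → Option ℕ
  | [], _ => none
  | _ :: _, [] => none
  | x :: xs, A :: As => if A = {x} then levelAux xs As else some x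

/-- `levelFn Σ σ` = `level(σ,Σ)` (as an `Option`; `none` = undefined). -/
def levelFn (Sig : List ℕ) (L : List (Finset ℕ)) : Option ℕ :=
  levelAux Sig.reverse L.reverse

/-- ordered set partitions of `[n] = {0,…,n}` -/
def OSPn (n : ℕ) : Type := {L : List (Finset ℕ) // IsOSP (Finset.range (n+1)) L}

/-- the graph `Γ_n`: vertices are the ordered set partitions of `[n]`, with `σ` and
`F(σ,x)` joined by an edge for every `x ∈ F(σ)`. -/
def Gamma (n : ℕ) : SimpleGraph (OSPn n) where
  Adj σ τ := σ ≠ τ ∧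
    ((∃ x ∈ Fset n σ.1, τ.1 = flipOSP x σ.1) ∨ (∃ x ∈ Fset n τ.1, σ.1 = flipOSP x τ.1))
  symm := ⟨fun σ τ h => ⟨h.1.symm, h.2.symm⟩⟩
  loopless := ⟨fun σ h => h.1 rfl⟩

/-- a matching: a set of edges of `G`, no two of which share a vertex -/
def IsMatchingSet {V : Type*} (G : SimpleGraph V) (M : Set (Sym2 V)) : Prop :=
  (∀ e ∈ M, e ∈ G.edgeSet) ∧ ∀ e ∈ M, ∀ f ∈ M, ∀ v : V, v ∈ e → v ∈ f → e = f

/-- a vertex is critical w.r.t. `M` if it lies in no edge of `M` -/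
def CriticalVx {V : Type*} (M : Set (Sym2 V)) (v : V) : Prop := ∀ e ∈ M, v ∉ e

/-- the standard matching `M_Σ`, as a set of edges of `Γ_n` -/
def MSigma (n : ℕ) (Sig : List ℕ) : Set (Sym2 (OSPn n)) :=
  {e | ∃ σ τ : OSPn n, ∃ x, levelFn Sig σ.1 = some x ∧ τ.1 = flipOSP x σ.1 ∧ e = s(σ, τ)}

/-- a list of edges is alternating w.r.t. `M` -/
def Alternates {V : Type*} (M : Set (Sym2 V)) (es : List (Sym2 V)) : Prop :=
  es.Chain' (fun e f => e ∈ M ↔ f ∉ M)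

def IsProperlyAlternating {V : Type*} {G : SimpleGraph V} (M : Set (Sym2 V)) {u v : V}
    (p : G.Walk u v) : Prop :=
  Alternates M p.edges ∧
  (∀ e, p.edges.head? = some e → e ∉ M → CriticalVx M u) ∧
  (∀ e, p.edges.getLast? = some e → e ∉ M → CriticalVx M v)

def IsSemiAugmenting {V : Type*} {G : SimpleGraph V} (M : Set (Sym2 V)) {u v : V}
    (p : G.Walk u v) : Prop :=
  IsProperlyAlternating M p ∧
  (∃ e, p.edges.head? = some e ∧ e ∈ M) ∧ (∃ e, p.edges.getLast? = some e ∧ e ∉ M)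

def IsNonAugmenting {V : Type*} {G : SimpleGraph V} (M : Set (Sym2 V)) {u v : V}
    (p : G.Walk u v) : Prop :=
  Alternates M p.edges ∧
  (∃ e, p.edges.head? = some e ∧ e ∈ M) ∧ (∃ e, p.edges.getLast? = some e ∧ e ∈ M)

def IsWeaklySemiAugmenting {V : Type*} {G : SimpleGraph V} (M : Set (Sym2 V)) {u v : V}
    (p : G.Walk u v) : Prop :=
  Alternates M p.edges ∧
  (p.edges = [] ∨
    ((∃ e, p.edges.head? = some e ∧ e ∈ M) ∧ (∃ e, p.edges.getLast? = some e ∧ e ∉ M)))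

/-- a partial ordered set partition, as a list of pairs of blocks `(A_i, B_i)` -/
abbrev RawPOSP := List (Finset ℕ × Finset ℕ)

def carrierP (σ : RawPOSP) : Finset ℕ := (σ.map Prod.fst).foldr (· ∪ ·) ∅
def colorsP (σ : RawPOSP) : Finset ℕ := (σ.map Prod.snd).foldr (· ∪ ·) ∅

/-- `σ` is a partial ordered set partition of `[n] = {0,…,n}` -/
def IsPOSP (n : ℕ) (σ : RawPOSP) : Prop :=
  σ ≠ [] ∧ (∀ p ∈ σ, p.2.Nonempty ∧ p.2 ⊆ p.1 ∧ p.1 ⊆ Finset.range (n+1)) ∧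
  (σ.map Prod.fst).Pairwise (fun A B => Disjoint A B)

/-- view an ordered set partition as a partial one, with `B_i = A_i` -/
def toPairs (L : List (Finset ℕ)) : RawPOSP := L.map (fun A => (A, A))

def dlAux (S : Finset ℕ) : Finset ℕ → RawPOSP → RawPOSP
  | _, [] => []
  | acc, (A, B) :: rest =>
    if B ⊆ S then dlAux S (acc ∪ A) rest
    else (acc ∪ A, B \ S) :: dlAux S ∅ rest

/-- the deletion `dl(σ, S)` -/
def dl (σ : RawPOSP) (S : Finset ℕ) : RawPOSP := dlAux S ∅ σ

/-- `D(σ, S)` = `A_i ∪ … ∪ A_t` for the minimal `i` with `B_i ∪ … ∪ B_t ⊆ S`, else `∅` -/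
def Dfun (S : Finset ℕ) : RawPOSP → Finset ℕ
  | [] => ∅
  | b :: rest => if colorsP (b :: rest) ⊆ S then carrierP (b :: rest) else Dfun S rest

def nodesAux : Finset ℕ → RawPOSP → Finset (Finset ℕ × ℕ)
  | _, [] => ∅
  | acc, (A, B) :: rest => B.image (fun x => (acc ∪ A, x)) ∪ nodesAux (acc ∪ A) rest

/-- the node set `V(σ)` of a partial ordered set partition -/
def nodesP (σ : RawPOSP) : Finset (Finset ℕ × ℕ) := nodesAux ∅ σ

/-- an ordered set partition of the whole of `[n]`, viewed as a partial one -/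
def IsFullOSP (n : ℕ) (σ : RawPOSP) : Prop :=
  IsPOSP n σ ∧ carrierP σ = Finset.range (n+1) ∧ ∀ p ∈ σ, p.2 = p.1

/-- simplices of the standard chromatic subdivision `χ(Δⁿ)` -/
def IsSimplexChi (n : ℕ) (W : Finset (Finset ℕ × ℕ)) : Prop :=
  ∃ σ : RawPOSP, IsFullOSP n σ ∧ W ⊆ nodesP σ

/-- a linked tuple of partial ordered set partitions -/
def Linked (T : List RawPOSP) : Prop := T.Chain' (fun σ τ => colorsP σ = carrierP τ)

/-- vertices of `χ^d(Δⁿ)`: linked `d`-tuples whose last entry has a singleton color set -/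
def IsVertexChi (n d : ℕ) (v : List RawPOSP) : Prop :=
  v.length = d ∧ (∀ σ ∈ v, IsPOSP n σ) ∧ Linked v ∧ (colorsP (v.getLastD [])).card = 1

/-- the `n`-simplices of `χ^d(Δⁿ)`: linked `d`-tuples of ordered set partitions of `[n]` -/
def IsTopSimplexChi (n d : ℕ) (T : List RawPOSP) : Prop :=
  T.length = d ∧ Linked T ∧
  ∀ σ ∈ T, IsPOSP n σ ∧ carrierP σ = Finset.range (n+1) ∧ ∀ p ∈ σ, p.2 = p.1

def faceAux : Finset ℕ → List RawPOSP → List RawPOSP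
  | _, [] => []
  | S, σ :: rest => dl σ S :: faceAux (Dfun S σ) rest

/-- the face of the simplex `T` of `χ^d(Δⁿ)` determined by `S_d = S`:
`(dl(σ_1,S_1),…,dl(σ_d,S_d))` with `S_i = D(σ_{i+1},S_{i+1})`. -/
def faceT (T : List RawPOSP) (S : Finset ℕ) : List RawPOSP := (faceAux S T.reverse).reverse

/-- the vertex of the `n`-simplex `T` colored `x` -/
def vertexOf (T : List RawPOSP) (x : ℕ) : List RawPOSP :=
  faceT T ((colorsP (T.getLastD [])) \ {x})

/-- relabel all elements by `f` -/
def relabel (f : ℕ → ℕ) (T : List RawPOSP) : List RawPOSP :=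
  T.map (fun σ => σ.map (fun p => (p.1.image f, p.2.image f)))

/-- the unique order preserving bijection `I → J` (extended by the identity) -/
noncomputable def oMap (I J : Finset ℕ) (h : I.card = J.card) (x : ℕ) : ℕ :=
  if hx : x ∈ I then ((J.orderIsoOfFin h.symm) ((I.orderIsoOfFin rfl).symm ⟨x, hx⟩) : ℕ)
  else x

/-- a compliant binary labeling of the vertices of `χ^d(Δⁿ)` -/
def Compliant (n d : ℕ) (lab : List RawPOSP → Bool) : Prop :=
  ∀ I J : Finset ℕ, I ⊆ Finset.range (n+1) → J ⊆ Finset.range (n+1) →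
    ∀ h : I.card = J.card, ∀ v : List RawPOSP, IsVertexChi n d v →
      carrierP v.headI ⊆ I → lab (relabel (oMap I J h) v) = lab v

/-- the number of ordered set partitions of `[n] = {0,…,n}` -/
noncomputable def fOSP (n : ℕ) : ℕ :=
  Nat.card {L : List (Finset ℕ) // IsOSP (Finset.range (n+1)) L}

/-- membership in the vertex set of `Γ_n(V)` -/
def InGammaV (V : Finset ℕ) (L : List (Finset ℕ)) : Prop :=
  ∃ A rest, L = A :: rest ∧ ¬ A ⊆ V

/-- a prefix in `V`: a tuple of nonempty pairwise disjoint subsets of `V` -/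
def IsPrefixIn {α : Type*} [DecidableEq α] (V : Finset α) (P : List (Finset α)) : Prop :=
  (∀ A ∈ P, A.Nonempty ∧ A ⊆ V) ∧ P.Pairwise (fun A B => Disjoint A B)

/-- membership in the vertex set of `Γ_n(V,𝒜)` -/
def InGammaVA (V : Finset ℕ) (P : List (Finset ℕ)) (L : List (Finset ℕ)) : Prop :=
  ∃ A rest, L = P ++ A :: rest ∧ ¬ A ⊆ V

/-- conducting bipartite graph of the first type -/
def ConductingFirst {V : Type*} (G : SimpleGraph V) (A B : Set V) : Prop :=
  A.ncard = B.ncard + 1 ∧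
  ∀ v ∈ A, ∃ M : Set (Sym2 V), IsMatchingSet G M ∧ ∀ u, CriticalVx M u ↔ u = v

/-- conducting bipartite graph of the second type -/
def ConductingSecond {V : Type*} (G : SimpleGraph V) (A B : Set V) : Prop :=
  A.ncard = B.ncard ∧
  ∀ v ∈ A, ∀ w ∈ B, ∃ M : Set (Sym2 V), IsMatchingSet G M ∧
    ∀ u, CriticalVx M u ↔ (u = v ∨ u = w)

/-- the vertex of the `n`-simplex `(As ‖ Bs)` of `χ²(Δⁿ)` colored `x` is internal -/
def InternalVx (n : ℕ) (As Bs : List (Finset ℕ)) (x : ℕ) : Prop :=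
  carrierP (dl (toPairs As) (Finset.range (n+1) \ seenBlk Bs x)) = Finset.range (n+1)

/-!
Write `σ = (… | A | {y₁} | … | {y_k})` where `Σ = (…, x, y₁, …, y_k)` and `A ≠ {x}`, so that
`x = level(σ, Σ)`. The flip at `x` either splits `{x}` off the block containing `x` or merges a
leading `{x}` into the next block, and these two moves are inverse to each other. Since `x` is
none of the `y_i` and the block in front of the trailing singletons stays different from `{x}`,
the flip leaves the trailing singletons alone and preserves the level. Hence `M_Σ` pairs each
`σ` with a defined level with `F(σ, level σ)`, and the critical vertices are those where the
level is undefined: `σ` and `({x_0}|…|{x_n})` are then suffixes of one another, which for two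
ordered set partitions of `[n]` forces equality.
-/

def singletons (l : List ℕ) : List (Finset ℕ) := l.map fun y => {y}

@[simp] theorem singletons_nil : singletons [] = [] := rfl

@[simp] theorem singletons_cons (y : ℕ) (l : List ℕ) :
    singletons (y :: l) = {y} :: singletons l := rfl

@[simp] theorem singletons_reverse (l : List ℕ) :
    singletons l.reverse = (singletons l).reverse := List.map_reverse ..

section lunion

variable {α : Type*} [DecidableEq α]

@[simp] theorem lunion_nil : lunion ([] : List (Finset α)) = ∅ := rfl

@[simp] theorem lunion_cons (A : Finset α) (L : List (Finset α)) :
    lunion (A :: L) = A ∪ lunion L := rfl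

@[simp] theorem lunion_append (P Q : List (Finset α)) :
    lunion (P ++ Q) = lunion P ∪ lunion Q := by
  induction P with
  | nil => simp
  | cons A P ih => simp [ih, Finset.union_assoc]

theorem mem_lunion {L : List (Finset α)} {x : α} : x ∈ lunion L ↔ ∃ A ∈ L, x ∈ A := by
  induction L with
  | nil => simp
  | cons A L ih => simp [ih]

end lunion

@[simp] theorem lunion_singletons (l : List ℕ) : lunion (singletons l) = l.toFinset := by
  induction l with
  | nil => rfl
  | cons y l ih => rw [singletons_cons, lunion_cons, ih, List.toFinset_cons, Finset.insert_eq]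

theorem eq_nil_of_lunion_subset {R X : List (Finset ℕ)}
    (hpw : (R ++ X).Pairwise Disjoint) (hne : ∀ B ∈ R, B.Nonempty)
    (hsub : lunion R ⊆ lunion X) : R = [] := by
  cases R with
  | nil => rfl
  | cons B R =>
    obtain ⟨b, hb⟩ := hne B (List.mem_cons_self ..)
    obtain ⟨C, hC, hbC⟩ := mem_lunion.1 (hsub (mem_lunion.2 ⟨B, List.mem_cons_self .., hb⟩))
    have hBC : Disjoint B C := List.pairwise_append.1 hpw |>.2.2 B (List.mem_cons_self ..) C hC
    exact absurd hbC (Finset.disjoint_left.1 hBC hb)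

theorem IsOSP.of_cons {U A : Finset ℕ} {L : List (Finset ℕ)} (h : IsOSP U (A :: L)) :
    IsOSP (lunion L) L :=
  ⟨fun B hB => h.1 B (List.mem_cons_of_mem A hB), (List.pairwise_cons.1 h.2.1).2, rfl⟩

theorem IsOSP.of_append_left {U : Finset ℕ} {L L' : List (Finset ℕ)} (h : IsOSP U (L ++ L')) :
    IsOSP (lunion L) L :=
  ⟨fun B hB => h.1 B (List.mem_append_left L' hB), (List.pairwise_append.1 h.2.1).1, rfl⟩

theorem Finset.eq_singleton_of_mem_of_not_two_le {C : Finset ℕ} {x : ℕ} (hx : x ∈ C)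
    (h : ¬ 2 ≤ C.card) : C = {x} := by
  have hpos : 0 < C.card := Finset.card_pos.2 ⟨x, hx⟩
  obtain ⟨a, rfl⟩ := Finset.card_eq_one.1 (show C.card = 1 by omega)
  rw [Finset.mem_singleton.1 hx]

section flip

variable {x : ℕ}

theorem flipOSP_append_of_notMem {P : List (Finset ℕ)} (h : x ∉ lunion P)
    (L : List (Finset ℕ)) : flipOSP x (P ++ L) = P ++ flipOSP x L := by
  induction P with
  | nil => rfl
  | cons A P ih =>
    simp only [lunion_cons, Finset.mem_union, not_or] at h
    simp [flipOSP, h.1, ih h.2]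

/-- `L` and `L'` are the two ends of an edge of `Γ_n` with color `x`: `flipOSP x` maps each of
them to the other. -/
def SplitsTo (x : ℕ) (L L' : List (Finset ℕ)) : Prop :=
  ∃ P B T, x ∉ lunion P ∧ x ∉ B ∧ B.Nonempty ∧
    L = P ++ insert x B :: T ∧ L' = P ++ {x} :: B :: T

namespace SplitsTo

variable {L L' : List (Finset ℕ)}

theorem cons {C : Finset ℕ} (hC : x ∉ C) (h : SplitsTo x L L') :
    SplitsTo x (C :: L) (C :: L') := by
  obtain ⟨P, B, T, hP, hB, hBne, rfl, rfl⟩ := h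
  exact ⟨C :: P, B, T, by simp [hC, hP], hB, hBne, rfl, rfl⟩

theorem flipOSP_left (h : SplitsTo x L L') : flipOSP x L = L' := by
  obtain ⟨P, B, T, hP, hB, hBne, rfl, rfl⟩ := h
  have h2 : 2 ≤ (insert x B).card := by
    rw [Finset.card_insert_of_notMem hB]; have := hBne.card_pos; omega
  rw [flipOSP_append_of_notMem hP]
  simp only [flipOSP, Finset.mem_insert_self, if_true, h2, Finset.erase_insert hB]

theorem flipOSP_right (h : SplitsTo x L L') : flipOSP x L' = L := by
  obtain ⟨P, B, T, hP, -, -, rfl, rfl⟩ := h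
  rw [flipOSP_append_of_notMem hP]
  simp [flipOSP]

theorem length_eq (h : SplitsTo x L L') : L'.length = L.length + 1 := by
  obtain ⟨P, B, T, -, -, -, rfl, rfl⟩ := h
  simp only [List.length_append, List.length_cons]
  omega

theorem append (h : SplitsTo x L L') (T : List (Finset ℕ)) :
    SplitsTo x (L ++ T) (L' ++ T) := by
  obtain ⟨P, B, T', hP, hB, hBne, rfl, rfl⟩ := h
  exact ⟨P, B, T' ++ T, hP, hB, hBne, by simp, by simp⟩

theorem isOSP_iff {U : Finset ℕ} (h : SplitsTo x L L') : IsOSP U L ↔ IsOSP U L' := by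
  obtain ⟨P, B, T, hP, hB, hBne, rfl, rfl⟩ := h
  simp [IsOSP, List.pairwise_append, Finset.disjoint_insert_left, Finset.disjoint_insert_right,
    hB, hBne, forall_and, or_imp, and_assoc]

theorem getLast?_ne_iff (h : SplitsTo x L L') :
    L.getLast? ≠ some {x} ↔ L'.getLast? ≠ some {x} := by
  obtain ⟨P, B, T, -, hB, hBne, rfl, rfl⟩ := h
  rcases T.eq_nil_or_concat' with rfl | ⟨T, C, rfl⟩
  · have h1 : insert x B ≠ {x} := fun h => by
      obtain ⟨b, hb⟩ := hBne
      have := h ▸ Finset.mem_insert_of_mem hb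
      exact hB (Finset.mem_singleton.1 this ▸ hb)
    have h2 : B ≠ {x} := fun h => hB (h ▸ Finset.mem_singleton_self x)
    simp [h1, h2]
  · simp only [← List.cons_append, ← List.append_assoc, List.getLast?_concat]

end SplitsTo

variable {U : Finset ℕ} {L : List (Finset ℕ)}

theorem IsOSP.splitsTo_flipOSP (hL : IsOSP U L) (hx : x ∈ U)
    (hlast : L.getLast? ≠ some {x}) :
    SplitsTo x L (flipOSP x L) ∨ SplitsTo x (flipOSP x L) L := by
  induction L generalizing U with
  | nil => simp [← hL.2.2] at hx
  | cons C Q ih =>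
    by_cases hxC : x ∈ C
    · by_cases h2 : 2 ≤ C.card
      · left
        have hne : (C.erase x).Nonempty :=
          (Finset.erase_nonempty hxC).2 (Finset.one_lt_card_iff_nontrivial.1 h2)
        have h : SplitsTo x (C :: Q) ({x} :: C.erase x :: Q) :=
          ⟨[], C.erase x, Q, by simp, Finset.notMem_erase x C, hne,
            by simp [Finset.insert_erase hxC], rfl⟩
        rwa [h.flipOSP_left]
      · obtain rfl := Finset.eq_singleton_of_mem_of_not_two_le hxC h2
        cases Q with
        | nil => exact absurd rfl hlast
        | cons B Q =>
          right
          have hxB : x ∉ B :=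
            Finset.disjoint_singleton_left.1 ((List.pairwise_cons.1 hL.2.1).1 B (by simp))
          have h : SplitsTo x (insert x B :: Q) ({x} :: B :: Q) :=
            ⟨[], B, Q, by simp, hxB, hL.1 B (by simp), rfl, rfl⟩
          rwa [h.flipOSP_right]
    · have hxQ : x ∈ lunion Q := by
        rw [← hL.2.2, lunion_cons, Finset.mem_union] at hx
        exact hx.resolve_left hxC
      have hQ : Q ≠ [] := by rintro rfl; simp at hxQ
      rw [List.getLast?_cons_of_ne_nil hQ] at hlast
      simp only [flipOSP, hxC, if_false]
      exact (ih hL.of_cons hxQ hlast).imp (·.cons hxC) (·.cons hxC)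

theorem flipOSP_flipOSP (hL : IsOSP U L) (hx : x ∈ U) (hlast : L.getLast? ≠ some {x}) :
    flipOSP x (flipOSP x L) = L := by
  rcases hL.splitsTo_flipOSP hx hlast with h | h
  exacts [h.flipOSP_right, h.flipOSP_left]

theorem isOSP_flipOSP (hL : IsOSP U L) (hx : x ∈ U) (hlast : L.getLast? ≠ some {x}) :
    IsOSP U (flipOSP x L) := by
  rcases hL.splitsTo_flipOSP hx hlast with h | h
  exacts [h.isOSP_iff.1 hL, h.isOSP_iff.2 hL]

theorem flipOSP_ne_self (hL : IsOSP U L) (hx : x ∈ U) (hlast : L.getLast? ≠ some {x}) :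
    flipOSP x L ≠ L := by
  intro he
  rcases hL.splitsTo_flipOSP hx hlast with h | h <;>
  · have := h.length_eq
    rw [he] at this
    omega

theorem flipOSP_append (hL : IsOSP U L) (hx : x ∈ U) (hlast : L.getLast? ≠ some {x})
    (T : List (Finset ℕ)) : flipOSP x (L ++ T) = flipOSP x L ++ T := by
  rcases hL.splitsTo_flipOSP hx hlast with h | h
  exacts [(h.append T).flipOSP_left, (h.append T).flipOSP_right]

theorem getLast?_flipOSP_ne (hL : IsOSP U L) (hx : x ∈ U) (hlast : L.getLast? ≠ some {x}) :
    (flipOSP x L).getLast? ≠ some {x} := by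
  rcases hL.splitsTo_flipOSP hx hlast with h | h
  exacts [h.getLast?_ne_iff.1 hlast, h.getLast?_ne_iff.2 hlast]

theorem mem_Fset_of_getLast?_ne {n : ℕ} (hx : x ∈ range (n + 1))
    (hlast : L.getLast? ≠ some {x}) : x ∈ Fset n L := by
  unfold Fset
  split
  · rename_i A hA
    split_ifs with hA1
    · obtain ⟨a, rfl⟩ := Finset.card_eq_one.1 hA1
      refine Finset.mem_sdiff.2 ⟨hx, fun hxa => hlast ?_⟩
      rw [hA, Finset.mem_singleton.1 hxa]
    · exact hx
  · exact hx

end flip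

section level

variable {Sig : List ℕ} {L : List (Finset ℕ)} {x : ℕ}

theorem levelAux_eq_some_iff {xs : List ℕ} {Rs : List (Finset ℕ)} :
    levelAux xs Rs = some x ↔
      ∃ t xs' A Rs', xs = t ++ x :: xs' ∧ Rs = singletons t ++ A :: Rs' ∧ A ≠ {x} := by
  constructor
  · induction xs generalizing Rs with
    | nil => simp [levelAux]
    | cons y ys ih =>
      cases Rs with
      | nil => simp [levelAux]
      | cons A As =>
        by_cases hA : A = {y}
        · rw [levelAux, if_pos hA]
          intro h
          obtain ⟨t, xs', A', Rs', rfl, rfl, hA'⟩ := ih h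
          exact ⟨y :: t, xs', A', Rs', rfl, by simp [hA], hA'⟩
        · rw [levelAux, if_neg hA, Option.some_inj]
          rintro rfl
          exact ⟨[], ys, A, As, rfl, rfl, hA⟩
  · rintro ⟨t, xs', A, Rs', rfl, rfl, hA⟩
    induction t with
    | nil => simp [levelAux, hA]
    | cons y t ih => simpa [levelAux] using ih

theorem levelFn_eq_some_iff :
    levelFn Sig L = some x ↔
      ∃ S₁ S₂ M A, Sig = S₁ ++ x :: S₂ ∧ L = M ++ A :: singletons S₂ ∧ A ≠ {x} := by
  rw [levelFn, levelAux_eq_some_iff]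
  constructor
  · rintro ⟨t, xs', A, Rs', hSig, hL, hA⟩
    refine ⟨xs'.reverse, t.reverse, Rs'.reverse, A, ?_, ?_, hA⟩
    · simpa using congrArg List.reverse hSig
    · simpa using congrArg List.reverse hL
  · rintro ⟨S₁, S₂, M, A, rfl, rfl, hA⟩
    exact ⟨S₂.reverse, S₁.reverse, A, M.reverse, by simp, by simp, hA⟩

theorem levelAux_eq_none_iff {xs : List ℕ} {Rs : List (Finset ℕ)} :
    levelAux xs Rs = none ↔ singletons xs <+: Rs ∨ Rs <+: singletons xs := by
  induction xs generalizing Rs with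
  | nil => simp [levelAux]
  | cons y ys ih =>
    cases Rs with
    | nil => simp [levelAux]
    | cons A As =>
      by_cases hA : A = {y}
      · simp [levelAux, hA, ih]
      · simp [levelAux, hA, Ne.symm hA]

theorem levelFn_eq_none_iff :
    levelFn Sig L = none ↔ singletons Sig <:+ L ∨ L <:+ singletons Sig := by
  rw [levelFn, levelAux_eq_none_iff, singletons_reverse, List.reverse_prefix,
    List.reverse_prefix]

theorem levelFn_eq_none_iff_eq_singletons (hnd : Sig.Nodup) (hL : IsOSP Sig.toFinset L) :
    levelFn Sig L = none ↔ L = singletons Sig := by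
  rw [levelFn_eq_none_iff]
  constructor
  · rintro (⟨R, rfl⟩ | ⟨R, hR⟩)
    · obtain rfl : R = [] := eq_nil_of_lunion_subset hL.2.1
        (fun B hB => hL.1 B (List.mem_append_left _ hB))
        (by rw [lunion_singletons, ← hL.2.2, lunion_append]; exact Finset.subset_union_left)
      rfl
    · have hpw : (singletons Sig).Pairwise Disjoint :=
        List.pairwise_map.2 (hnd.imp fun hab => Finset.disjoint_singleton.2 hab)
      obtain rfl : R = [] := eq_nil_of_lunion_subset (hR ▸ hpw)
        (fun B hB => by
          obtain ⟨y, -, rfl⟩ := List.mem_map.1 (hR ▸ List.mem_append_left L hB)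
          exact Finset.singleton_nonempty y)
        (by rw [hL.2.2, ← lunion_singletons, ← hR, lunion_append]; exact Finset.subset_union_left)
      exact hR
  · rintro rfl
    exact Or.inl (List.suffix_refl _)

theorem notMem_of_nodup_middle {S₁ S₂ : List ℕ} (hnd : (S₁ ++ x :: S₂).Nodup) : x ∉ S₂ :=
  fun h => (List.nodup_cons.1 (List.nodup_middle.1 hnd)).1 (List.mem_append_right _ h)

theorem mem_of_levelFn_eq_some (h : levelFn Sig L = some x) : x ∈ Sig := by
  obtain ⟨S₁, S₂, M, A, rfl, -, -⟩ := levelFn_eq_some_iff.1 h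
  simp

theorem getLast?_ne_of_levelFn_eq_some (hnd : Sig.Nodup) (h : levelFn Sig L = some x) :
    L.getLast? ≠ some {x} := by
  obtain ⟨S₁, S₂, M, A, rfl, rfl, hA⟩ := levelFn_eq_some_iff.1 h
  rw [List.getLast?_append_cons]
  intro hlast
  rcases List.mem_cons.1 (List.mem_of_getLast? hlast) with hxA | hxS
  · exact hA hxA.symm
  · obtain ⟨y, hy, hyx⟩ := List.mem_map.1 hxS
    exact notMem_of_nodup_middle hnd (Finset.singleton_injective hyx ▸ hy)

theorem levelFn_flipOSP {U : Finset ℕ} (hnd : Sig.Nodup) (hL : IsOSP U L) (hx : x ∈ U)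
    (h : levelFn Sig L = some x) : levelFn Sig (flipOSP x L) = some x := by
  obtain ⟨S₁, S₂, M, A, rfl, rfl, hA⟩ := levelFn_eq_some_iff.1 h
  have hsplit : M ++ A :: singletons S₂ = (M ++ [A]) ++ singletons S₂ := by simp
  rw [hsplit] at hL ⊢
  have hK := hL.of_append_left
  have hxK : x ∈ lunion (M ++ [A]) := by
    rw [← hL.2.2, lunion_append, lunion_singletons, Finset.mem_union] at hx
    exact hx.resolve_right (by simpa using notMem_of_nodup_middle hnd)
  have hlastK : (M ++ [A]).getLast? ≠ some {x} := by simp [hA]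
  rw [flipOSP_append hK hxK hlastK]
  have hflipK := (isOSP_flipOSP hK hxK hlastK).2.2
  rcases (flipOSP x (M ++ [A])).eq_nil_or_concat' with h0 | ⟨M', A', h0⟩
  · rw [h0, lunion_nil] at hflipK
    simp [← hflipK] at hxK
  · have hA' : A' ≠ {x} := by simpa [h0] using getLast?_flipOSP_ne hK hxK hlastK
    rw [h0]
    exact levelFn_eq_some_iff.2 ⟨S₁, S₂, M', A', rfl, by simp, hA'⟩

end level

section matching

variable {n : ℕ} {Sig : List ℕ}

theorem mem_edgeSet_of_mem_MSigma (hnd : Sig.Nodup)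
    (hmem : ∀ y, y ∈ Sig ↔ y ∈ range (n + 1)) {e : Sym2 (OSPn n)} (he : e ∈ MSigma n Sig) :
    e ∈ (Gamma n).edgeSet := by
  obtain ⟨σ, τ, x, hσ, hτ, rfl⟩ := he
  have hx := (hmem x).1 (mem_of_levelFn_eq_some hσ)
  have hlast := getLast?_ne_of_levelFn_eq_some hnd hσ
  refine ⟨fun h => flipOSP_ne_self σ.2 hx hlast ?_,
    Or.inl ⟨x, mem_Fset_of_getLast?_ne hx hlast, hτ⟩⟩
  rw [← hτ, show σ = τ from h]

theorem exists_eq_of_mem_MSigma (hnd : Sig.Nodup)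
    (hmem : ∀ y, y ∈ Sig ↔ y ∈ range (n + 1)) {e : Sym2 (OSPn n)} (he : e ∈ MSigma n Sig)
    {v : OSPn n} (hv : v ∈ e) :
    ∃ x w, levelFn Sig v.1 = some x ∧ w.1 = flipOSP x v.1 ∧ e = s(v, w) := by
  obtain ⟨σ, τ, x, hσ, hτ, rfl⟩ := he
  rcases Sym2.mem_iff.1 hv with rfl | rfl
  · exact ⟨x, τ, hσ, hτ, rfl⟩
  · have hx := (hmem x).1 (mem_of_levelFn_eq_some hσ)
    have hlast := getLast?_ne_of_levelFn_eq_some hnd hσ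
    refine ⟨x, σ, hτ ▸ levelFn_flipOSP hnd σ.2 hx hσ, ?_, Sym2.eq_swap⟩
    rw [hτ, flipOSP_flipOSP σ.2 hx hlast]

theorem isMatchingSet_MSigma (hnd : Sig.Nodup) (hmem : ∀ y, y ∈ Sig ↔ y ∈ range (n + 1)) :
    IsMatchingSet (Gamma n) (MSigma n Sig) := by
  refine ⟨fun e he => mem_edgeSet_of_mem_MSigma hnd hmem he, fun e he f hf v hve hvf => ?_⟩
  obtain ⟨x, w, hx, hw, rfl⟩ := exists_eq_of_mem_MSigma hnd hmem he hve
  obtain ⟨x', w', hx', hw', rfl⟩ := exists_eq_of_mem_MSigma hnd hmem hf hvf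
  obtain rfl : x = x' := Option.some_injective _ (hx.symm.trans hx')
  obtain rfl : w = w' := Subtype.ext (hw.trans hw'.symm)
  rfl

theorem criticalVx_MSigma_iff (hnd : Sig.Nodup) (hmem : ∀ y, y ∈ Sig ↔ y ∈ range (n + 1))
    (v : OSPn n) : CriticalVx (MSigma n Sig) v ↔ levelFn Sig v.1 = none := by
  constructor
  · intro hv
    by_contra hne
    obtain ⟨x, hx⟩ := Option.ne_none_iff_exists'.1 hne
    have hosp := isOSP_flipOSP v.2 ((hmem x).1 (mem_of_levelFn_eq_some hx))
      (getLast?_ne_of_levelFn_eq_some hnd hx)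
    exact hv _ ⟨v, ⟨_, hosp⟩, x, hx, rfl, rfl⟩ (Sym2.mem_mk_left _ _)
  · intro hv e he hve
    obtain ⟨x, -, hx, -⟩ := exists_eq_of_mem_MSigma hnd hmem he hve
    simp [hv] at hx

end matching

/-- For a permutation `Σ` of `[n]`, the standard matching `M_Σ` is a near-perfect
matching of `Γ_n` whose unique critical vertex is the partition of `[n]` into the
singletons `({x_0}|{x_1}|…|{x_n})`. -/
theorem statement11 (n : ℕ) (Sig : List ℕ) (hnd : Sig.Nodup)
    (hmem : ∀ y, y ∈ Sig ↔ y ∈ Finset.range (n + 1)) :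
    IsMatchingSet (Gamma n) (MSigma n Sig) ∧
    ∀ v : OSPn n, CriticalVx (MSigma n Sig) v ↔
      v.1 = Sig.map (fun y => ({y} : Finset ℕ)) := by
  refine ⟨isMatchingSet_MSigma hnd hmem, fun v => ?_⟩
  have hSig : Sig.toFinset = range (n + 1) := Finset.ext fun y => by simp [hmem]
  have hv : IsOSP Sig.toFinset v.1 := by rw [hSig]; exact v.2
  exact (criticalVx_MSigma_iff hnd hmem v).trans (levelFn_eq_none_iff_eq_singletons hnd hv)
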